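/- Let (G,H) be dense and suppose u ∈ V(G) is not a cut vertex of G. Then either D⁺_{G,H}(u) contains two consecutive integers, or D⁺_{G,H}(u) equals the set of all odd integers in [0, d_G(u)], or D⁺_{G,H}(u) equals the set of all even integers in [0, d_G(u)]. -/

import Mathlib

/-- An orientation of a graph: each edge is assigned a source endpoint. -/
structure GOrientation {V : Type*} (G : SimpleGraph V) where
  src : Sym2 V → V
  mem : ∀ e ∈ G.edgeSet, src e ∈ e

/-- Out-degree of `v` under orientation `O`: number of edges whose source is `v`. -/
noncomputable def outDeg {V : Type*} {G : SimpleGraph V} (O : GOrientation G) (v : V) : ℕ :=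
  Set.ncard {e ∈ G.edgeSet | O.src e = v}

/-- Degree of a vertex. -/
noncomputable def deg {V : Type*} (G : SimpleGraph V) (v : V) : ℕ :=
  (G.neighborSet v).ncard

/-- The pair `(G, H)` is dense: `G` is connected and `i ∉ H v → i+1 ∈ H v`. -/
def DensePair {V : Type*} (G : SimpleGraph V) (H : V → Set ℕ) : Prop :=
  G.Connected ∧ ∀ v : V, ∀ i : ℕ, i ∉ H v → i + 1 ∈ H v

/-- `D⁺_{G,H}(u)`: possible out-degrees of `u` over orientations feasible away from `u`. -/
noncomputable def Dset {V : Type*} (G : SimpleGraph V) (H : V → Set ℕ) (u : V) : Set ℕ :=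
  {d | ∃ O : GOrientation G, (∀ x, x ≠ u → outDeg O x ∈ H x) ∧ outDeg O u = d}

/-- `x` is a cut vertex: `G` is connected but `G - x` is not. -/
def IsCutVertex {V : Type*} (G : SimpleGraph V) (x : V) : Prop :=
  G.Connected ∧ ¬ (G.induce ({x}ᶜ : Set V)).Connected

/-!
Reorienting an edge `wv` changes the out-degrees of `w` and `v` by one in opposite directions.
Since `H w` contains one of any two consecutive integers, a vertex `w` violating its constraint
is repaired by choosing the orientation of one edge `wv` suitably, which moves the defect to `v`;
along a walk a defect can thus be moved anywhere without disturbing other vertices. Starting from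
an arbitrary orientation this gives orientations feasible away from `u`.

If `u` is not a cut vertex and `d ∈ D⁺(u)`, reorient an edge `ua`, move the resulting defect
through `G - u` from `a` to another neighbour `b`, and absorb it at `u` by orienting `ub`. When
`ua` and `ub` both leave `u` this realises `d - 1` or `d - 2`; when both enter `u`, `d + 1` or
`d + 2`. So if `D⁺(u)` has no two consecutive elements it is closed under `± 2` inside
`[0, d_G(u)]`, hence it is a whole parity class there.
-/

namespace GOrientation

variable {V : Type*} [DecidableEq V] {G : SimpleGraph V}

def setSrc (O : GOrientation G) (e₀ : Sym2 V) (y : V) (hy : y ∈ e₀) : GOrientation G where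
  src e := if e = e₀ then y else O.src e
  mem e he := by
    split_ifs with h
    · exact h ▸ hy
    · exact O.mem e he

@[simp]
lemma setSrc_src_self (O : GOrientation G) (e₀ : Sym2 V) (y : V) (hy : y ∈ e₀) :
    (O.setSrc e₀ y hy).src e₀ = y := if_pos rfl

lemma setSrc_src_of_ne (O : GOrientation G) {e₀ e : Sym2 V} (y : V) (hy : y ∈ e₀) (he : e ≠ e₀) :
    (O.setSrc e₀ y hy).src e = O.src e := if_neg he

end GOrientation

section OutDegree

variable {V : Type*} {G : SimpleGraph V}

lemma outDeg_congr {O O' : GOrientation G} {x : V}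
    (h : ∀ e ∈ G.edgeSet, x ∈ e → O'.src e = O.src e) : outDeg O' x = outDeg O x := by
  unfold outDeg
  congr 1
  ext e
  refine and_congr_right fun he => ⟨fun hx => ?_, fun hx => ?_⟩
  · rw [← h e he (hx ▸ O'.mem e he), hx]
  · rw [h e he (hx ▸ O.mem e he), hx]

lemma outDeg_eq_ncard_adj (O : GOrientation G) (u : V) :
    outDeg O u = {v | G.Adj u v ∧ O.src s(u, v) = u}.ncard := by
  have himage : {e ∈ G.edgeSet | O.src e = u} =
      (fun v => s(u, v)) '' {v | G.Adj u v ∧ O.src s(u, v) = u} := by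
    ext e
    constructor
    · rintro ⟨he, hsrc⟩
      have hu : u ∈ e := hsrc ▸ O.mem e he
      refine ⟨Sym2.Mem.other hu, ?_, Sym2.other_spec hu⟩
      rw [Set.mem_ofPred, ← G.mem_edgeSet, Sym2.other_spec hu]
      exact ⟨he, hsrc⟩
    · rintro ⟨v, ⟨hadj, hsrc⟩, rfl⟩
      exact ⟨hadj, hsrc⟩
  rw [outDeg, himage, Set.ncard_image_of_injective _ fun _ _ => Sym2.congr_right.1]

variable [Finite V]

lemma outDeg_eq_ncard_sdiff_add_ite [DecidableEq V] (O : GOrientation G) {e₀ : Sym2 V}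
    (he₀ : e₀ ∈ G.edgeSet) (x : V) :
    outDeg O x = ({e ∈ G.edgeSet | O.src e = x} \ {e₀}).ncard + if O.src e₀ = x then 1 else 0 := by
  split_ifs with h
  · exact (Set.ncard_sdiff_singleton_add_one (s := {e ∈ G.edgeSet | O.src e = x}) ⟨he₀, h⟩).symm
  · rw [Set.sdiff_singleton_eq_self fun hm => h hm.2]; rfl

lemma outDeg_add_ite_eq [DecidableEq V] {O O' : GOrientation G} {e₀ : Sym2 V} {x : V}
    (he₀ : e₀ ∈ G.edgeSet) (h : ∀ e ∈ G.edgeSet, x ∈ e → e ≠ e₀ → O'.src e = O.src e) :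
    outDeg O' x + (if O.src e₀ = x then 1 else 0) =
      outDeg O x + if O'.src e₀ = x then 1 else 0 := by
  have hrest : {e ∈ G.edgeSet | O'.src e = x} \ {e₀} = {e ∈ G.edgeSet | O.src e = x} \ {e₀} := by
    ext e
    refine and_congr_left fun hne => and_congr_right fun he => ⟨fun hx => ?_, fun hx => ?_⟩
    · rw [← h e he (hx ▸ O'.mem e he) hne, hx]
    · rw [h e he (hx ▸ O.mem e he) hne, hx]
  rw [outDeg_eq_ncard_sdiff_add_ite O' he₀, outDeg_eq_ncard_sdiff_add_ite O he₀, hrest]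
  ring

lemma ncard_adj_src_ne_add_outDeg (O : GOrientation G) (u : V) :
    {v | G.Adj u v ∧ O.src s(u, v) ≠ u}.ncard + outDeg O u = deg G u := by
  rw [outDeg_eq_ncard_adj, add_comm, deg]
  exact Set.ncard_inter_add_ncard_sdiff_eq_ncard (G.neighborSet u) {v | O.src s(u, v) = u}

lemma outDeg_le_deg (O : GOrientation G) (u : V) : outDeg O u ≤ deg G u :=
  ncard_adj_src_ne_add_outDeg O u ▸ Nat.le_add_left _ _

end OutDegree

section Repair

variable {V : Type*} [Finite V] [DecidableEq V] {G : SimpleGraph V} {H : V → Set ℕ}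

/-- The two orientations of `wv` give `w` consecutive out-degrees, and one of any two consecutive
integers lies in `H w`. -/
lemma exists_outDeg_mem_of_adj (hH : ∀ v i, i ∉ H v → i + 1 ∈ H v) (O : GOrientation G)
    {w v : V} (h : G.Adj w v) :
    ∃ O' : GOrientation G, (∀ e ≠ s(w, v), O'.src e = O.src e) ∧ outDeg O' w ∈ H w := by
  set Ow := O.setSrc s(w, v) w (Sym2.mem_mk_left _ _)
  set Ov := O.setSrc s(w, v) v (Sym2.mem_mk_right _ _)
  have hcount : outDeg Ow w = outDeg Ov w + 1 := by
    have := outDeg_add_ite_eq (O := Ov) (O' := Ow) (x := w) (G.mem_edgeSet.2 h)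
      fun e _ _ hne => by rw [O.setSrc_src_of_ne _ _ hne, O.setSrc_src_of_ne _ _ hne]
    simpa [Ow, Ov, h.ne.symm] using this
  by_cases hv : outDeg Ov w ∈ H w
  · exact ⟨Ov, fun e he => O.setSrc_src_of_ne _ _ he, hv⟩
  · exact ⟨Ow, fun e he => O.setSrc_src_of_ne _ _ he, hcount ▸ hH w _ hv⟩

lemma exists_feasible_of_walk (hH : ∀ v i, i ∉ H v → i + 1 ∈ H v) (R : Set V) :
    ∀ {a b : V} (p : G.Walk a b) (O : GOrientation G), (∀ x ∈ R, x ≠ a → outDeg O x ∈ H x) →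
      ∃ O' : GOrientation G, (∀ x ∈ R, x ≠ b → outDeg O' x ∈ H x) ∧
        ∀ e ∉ p.edges, O'.src e = O.src e
  | _, _, .nil, O, hO => ⟨O, hO, fun _ _ => rfl⟩
  | a, _, .cons (v := v) h p, O, hO => by
    obtain ⟨O₁, hagree₁, ha⟩ := exists_outDeg_mem_of_adj hH O h
    have hO₁ : ∀ x ∈ R, x ≠ v → outDeg O₁ x ∈ H x := by
      intro x hx hxv
      by_cases hxa : x = a
      · exact hxa ▸ ha
      · rw [outDeg_congr fun e _ hxe => hagree₁ e ?_]
        · exact hO x hx hxa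
        · rintro rfl
          exact (Sym2.mem_iff.1 hxe).elim hxa hxv
    obtain ⟨O₂, hO₂, hagree₂⟩ := exists_feasible_of_walk hH R p O₁ hO₁
    refine ⟨O₂, hO₂, fun e he => ?_⟩
    rw [SimpleGraph.Walk.edges_cons, List.mem_cons, not_or] at he
    rw [hagree₂ e he.2, hagree₁ e he.1]

end Repair

lemma SimpleGraph.Connected.exists_walk_support_subset {V : Type*} {G : SimpleGraph V}
    {s : Set V} (hG : (G.induce s).Connected) {a b : V} (ha : a ∈ s) (hb : b ∈ s) :
    ∃ p : G.Walk a b, ∀ x ∈ p.support, x ∈ s := by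
  obtain ⟨q⟩ := hG ⟨a, ha⟩ ⟨b, hb⟩
  refine ⟨q.map (SimpleGraph.Embedding.induce s).toHom, fun x hx => ?_⟩
  obtain ⟨y, -, rfl⟩ := List.mem_map.1 (q.support_map _ ▸ hx)
  exact y.2

section Feasible

variable {V : Type*} [DecidableEq V] {G : SimpleGraph V} {H : V → Set ℕ}

lemma exists_feasible [Fintype V] (hG : G.Connected) (hH : ∀ v i, i ∉ H v → i + 1 ∈ H v)
    (u : V) : ∃ O : GOrientation G, ∀ x, x ≠ u → outDeg O x ∈ H x := by
  suffices ∀ T : Finset V, ∃ O : GOrientation G, ∀ x ∈ T, x ≠ u → outDeg O x ∈ H x by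
    obtain ⟨O, hO⟩ := this Finset.univ
    exact ⟨O, fun x => hO x (Finset.mem_univ x)⟩
  intro T
  induction T using Finset.induction_on with
  | empty => exact ⟨⟨fun e => e.out.1, fun e _ => Sym2.out_fst_mem e⟩, by simp⟩
  | insert a T _ ih =>
    obtain ⟨O, hO⟩ := ih
    obtain ⟨O', hO', -⟩ := exists_feasible_of_walk hH {x | x ∈ insert a T ∧ x ≠ u}
      (hG.preconnected a u).some O fun x ⟨hx, hxu⟩ hxa =>
        hO x ((Finset.mem_insert.1 hx).resolve_left hxa) hxu
    exact ⟨O', fun x hx hxu => hO' x ⟨hx, hxu⟩ hxu⟩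

variable [Finite V] {u : V}

lemma exists_feasible_of_defect (hH : ∀ v i, i ∉ H v → i + 1 ∈ H v)
    (hG : (G.induce ({u}ᶜ : Set V)).Connected) {O : GOrientation G} {a b : V} (ha : a ≠ u)
    (hb : G.Adj u b) (hO : ∀ x, x ≠ u → x ≠ a → outDeg O x ∈ H x) :
    ∃ O' : GOrientation G, (∀ x, x ≠ u → outDeg O' x ∈ H x) ∧
      ∀ e ∈ G.edgeSet, u ∈ e → e ≠ s(u, b) → O'.src e = O.src e := by
  obtain ⟨p, hp⟩ := hG.exists_walk_support_subset ha hb.ne'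
  obtain ⟨O', hO', hagree⟩ := exists_feasible_of_walk hH {u}ᶜ (p.concat hb.symm) O hO
  refine ⟨O', fun x hx => hO' x hx hx, fun e _ hue hne => hagree e ?_⟩
  rw [SimpleGraph.Walk.edges_concat, List.concat_eq_append, List.mem_append, List.mem_singleton,
    not_or, Sym2.eq_swap]
  refine ⟨fun hep => hp u ?_ rfl, hne⟩
  rw [← Sym2.other_spec hue] at hep
  exact p.fst_mem_support_of_mem_edges hep

/-- Orient `ua` from `y`, then carry the defect at `a` through `G - u` to `b` and absorb it with the
edge `ub`; the identity accounts for the only two edges at `u` that change. -/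
lemma exists_feasible_of_reorient (hH : ∀ v i, i ∉ H v → i + 1 ∈ H v)
    (hG : (G.induce ({u}ᶜ : Set V)).Connected) {O : GOrientation G}
    (hO : ∀ x, x ≠ u → outDeg O x ∈ H x) {a b : V} (ha : G.Adj u a) (hb : G.Adj u b)
    (hab : a ≠ b) (y : V) (hy : y ∈ s(u, a)) :
    ∃ O' : GOrientation G, (∀ x, x ≠ u → outDeg O' x ∈ H x) ∧
      outDeg O' u + (if O.src s(u, a) = u then 1 else 0) + (if O.src s(u, b) = u then 1 else 0) =
        outDeg O u + (if y = u then 1 else 0) + (if O'.src s(u, b) = u then 1 else 0) := by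
  set O₁ := O.setSrc s(u, a) y hy
  have hO₁ : ∀ x, x ≠ u → x ≠ a → outDeg O₁ x ∈ H x := by
    intro x hxu hxa
    rw [outDeg_congr fun e _ hxe => O.setSrc_src_of_ne y hy ?_]
    · exact hO x hxu
    · rintro rfl
      exact (Sym2.mem_iff.1 hxe).elim hxu hxa
  have hcount₁ := outDeg_add_ite_eq (O := O) (O' := O₁) (x := u) (G.mem_edgeSet.2 ha)
    fun e _ _ hne => O.setSrc_src_of_ne y hy hne
  obtain ⟨O₂, hO₂, hagree⟩ := exists_feasible_of_defect hH hG ha.ne' hb hO₁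
  have hcount₂ := outDeg_add_ite_eq (O := O₁) (O' := O₂) (x := u) (G.mem_edgeSet.2 hb)
    fun e he hue hne => hagree e he hue hne
  have hb₁ : O₁.src s(u, b) = O.src s(u, b) :=
    O.setSrc_src_of_ne y hy fun h => hab (Sym2.congr_right.1 h).symm
  rw [hb₁] at hcount₂
  rw [O.setSrc_src_self] at hcount₁
  exact ⟨O₂, hO₂, by omega⟩

lemma succ_mem_or_mem_Dset_of_add_two_mem (hH : ∀ v i, i ∉ H v → i + 1 ∈ H v)
    (hG : (G.induce ({u}ᶜ : Set V)).Connected) {d : ℕ} (hd : d + 2 ∈ Dset G H u) :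
    d + 1 ∈ Dset G H u ∨ d ∈ Dset G H u := by
  obtain ⟨O, hO, hdeg⟩ := hd
  have htwo : 1 < {v | G.Adj u v ∧ O.src s(u, v) = u}.ncard := by
    rw [← outDeg_eq_ncard_adj, hdeg]; omega
  obtain ⟨a, b, ⟨ha, hsa⟩, ⟨hb, hsb⟩, hab⟩ := (Set.one_lt_ncard_iff (Set.toFinite _)).1 htwo
  obtain ⟨O', hO', hcount⟩ :=
    exists_feasible_of_reorient hH hG hO ha hb hab a (Sym2.mem_mk_right _ _)
  simp only [hsa, hsb, ha.ne', if_true, if_false] at hcount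
  split_ifs at hcount
  · exact Or.inl ⟨O', hO', by omega⟩
  · exact Or.inr ⟨O', hO', by omega⟩

lemma succ_mem_or_add_two_mem_Dset (hH : ∀ v i, i ∉ H v → i + 1 ∈ H v)
    (hG : (G.induce ({u}ᶜ : Set V)).Connected) {d : ℕ} (hd : d ∈ Dset G H u)
    (hdu : d + 2 ≤ deg G u) : d + 1 ∈ Dset G H u ∨ d + 2 ∈ Dset G H u := by
  obtain ⟨O, hO, rfl⟩ := hd
  have htwo : 1 < {v | G.Adj u v ∧ O.src s(u, v) ≠ u}.ncard := by
    have := ncard_adj_src_ne_add_outDeg O u; omega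
  obtain ⟨a, b, ⟨ha, hsa⟩, ⟨hb, hsb⟩, hab⟩ := (Set.one_lt_ncard_iff (Set.toFinite _)).1 htwo
  obtain ⟨O', hO', hcount⟩ :=
    exists_feasible_of_reorient hH hG hO ha hb hab u (Sym2.mem_mk_left _ _)
  simp only [hsa, hsb, if_true, if_false] at hcount
  split_ifs at hcount
  · exact Or.inr ⟨O', hO', by omega⟩
  · exact Or.inl ⟨O', hO', by omega⟩

end Feasible

section NatSet

variable {S : Set ℕ} {n : ℕ}

lemma eq_setOf_mod_two_eq_of_not_consecutive (hcons : ∀ i ∈ S, i + 1 ∉ S) {d₀ : ℕ} (hd₀ : d₀ ∈ S)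
    (hle : ∀ d ∈ S, d ≤ n) (hdown : ∀ d, d + 2 ∈ S → d + 1 ∈ S ∨ d ∈ S)
    (hup : ∀ d ∈ S, d + 2 ≤ n → d + 1 ∈ S ∨ d + 2 ∈ S) :
    S = {i | i ≤ n ∧ i % 2 = d₀ % 2} := by
  have down : ∀ k d, d + 2 * k ∈ S → d ∈ S := by
    intro k
    induction k with
    | zero => exact fun d h => h
    | succ k ih =>
      intro d h
      exact ih d ((hdown (d + 2 * k) h).resolve_left fun h' => hcons _ h' h)
  have up : ∀ k d, d ∈ S → d + 2 * k ≤ n → d + 2 * k ∈ S := by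
    intro k
    induction k with
    | zero => exact fun d h _ => h
    | succ k ih =>
      intro d h hn
      have h' := ih d h (by omega)
      exact (hup _ h' (by omega)).resolve_left (hcons _ h')
  ext i
  constructor
  · intro hi
    refine ⟨hle i hi, by_contra fun hpar => ?_⟩
    rcases le_total i d₀ with h | h
    · exact hcons i hi (down ((d₀ - i - 1) / 2) (i + 1) (by convert hd₀ using 1; omega))
    · exact hcons d₀ hd₀ (down ((i - d₀ - 1) / 2) (d₀ + 1) (by convert hi using 1; omega))
  · rintro ⟨hin, hpar⟩
    rcases le_total i d₀ with h | h
    · exact down ((d₀ - i) / 2) i (by convert hd₀ using 1; omega)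
    · convert up ((i - d₀) / 2) d₀ hd₀ (by omega) using 1; omega

lemma exists_consecutive_or_eq_odd_or_eq_even (hne : S.Nonempty) (hle : ∀ d ∈ S, d ≤ n)
    (hdown : ∀ d, d + 2 ∈ S → d + 1 ∈ S ∨ d ∈ S)
    (hup : ∀ d ∈ S, d + 2 ≤ n → d + 1 ∈ S ∨ d + 2 ∈ S) :
    (∃ i, i ∈ S ∧ i + 1 ∈ S) ∨ S = {i | i ≤ n ∧ Odd i} ∨ S = {i | i ≤ n ∧ Even i} := by
  by_cases hcons : ∃ i, i ∈ S ∧ i + 1 ∈ S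
  · exact Or.inl hcons
  push Not at hcons
  obtain ⟨d₀, hd₀⟩ := hne
  rw [eq_setOf_mod_two_eq_of_not_consecutive hcons hd₀ hle hdown hup]
  right
  rcases Nat.mod_two_eq_zero_or_one d₀ with h | h
  · right; simp only [h, Nat.even_iff]
  · left; simp only [h, Nat.odd_iff]

end NatSet

theorem stmt5 {V : Type*} [Fintype V] (G : SimpleGraph V) (H : V → Set ℕ)
    (hd : DensePair G H) (u : V) (hu : ¬ IsCutVertex G u) :
    (∃ i, i ∈ Dset G H u ∧ i + 1 ∈ Dset G H u) ∨
    Dset G H u = {i | i ≤ deg G u ∧ Odd i} ∨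
    Dset G H u = {i | i ≤ deg G u ∧ Even i} := by
  classical
  obtain ⟨hconn, hH⟩ := hd
  have hG : (G.induce ({u}ᶜ : Set V)).Connected := by
    by_contra h
    exact hu ⟨hconn, h⟩
  obtain ⟨O, hO⟩ := exists_feasible hconn hH u
  refine exists_consecutive_or_eq_odd_or_eq_even ⟨_, O, hO, rfl⟩ ?_
    (fun _ => succ_mem_or_mem_Dset_of_add_two_mem hH hG)
    (fun _ => succ_mem_or_add_two_mem_Dset hH hG)
  rintro _ ⟨O', -, rfl⟩
  exact outDeg_le_deg O' u
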